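/- The discrete LPS tangent stiffness is symmetric when the discretization uses symmetric families and reciprocal quadrature weights: if j ∈ F_i ⟺ i ∈ F_j, V_j^{(i)} = V_i^{(j)}, and m_i = m_j =: m for all interacting pairs, then the matrix A of the linear map {u_i} ↦ {−𝓛^h_LPS[x_i]} (with the discrete LPS definitions) satisfies A = Aᵀ with respect to the volume-weighted inner product ⟨u, v⟩ = Σ_i u_i · v_i V_i. -/

import Mathlib

local notation "E3" => EuclideanSpace ℝ (Fin 3)

/-- Discrete linearized nonlocal dilatation (common weighted volume `m`):
`θ_i = (3/m) Σ_{j∈F_i} κ_{ij} (x_j−x_i)·(u_j−u_i) V_j`. -/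
noncomputable def dTheta {ι : Type*} (x : ι → E3) (F : ι → Finset ι) (V : ι → ℝ)
    (κ : ℝ → ℝ) (m : ℝ) (u : ι → E3) (i : ι) : ℝ :=
  (3 / m) * ∑ j ∈ F i, κ ‖x j - x i‖ * (inner ℝ (x j - x i) (u j - u i) : ℝ) * V j

/-- Discrete linearized LPS operator with a common weighted volume `m`:
`𝓛^h_i = Σ_{j∈F_i} (κ_{ij}/m){(3K−5G)(θ_i+θ_j)(x_j−x_i)
  + 30G ((x_j−x_i)⊗(x_j−x_i)/|x_j−x_i|²)(u_j−u_i)} V_j`. -/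
noncomputable def dLPS {ι : Type*} (x : ι → E3) (F : ι → Finset ι) (V : ι → ℝ)
    (κ : ℝ → ℝ) (m K G : ℝ) (u : ι → E3) (i : ι) : E3 :=
  ∑ j ∈ F i, (V j * (κ ‖x j - x i‖ / m)) •
    (((3 * K - 5 * G) * (dTheta x F V κ m u i + dTheta x F V κ m u j)) • (x j - x i) +
      ((30 * G / ‖x j - x i‖ ^ 2) * (inner ℝ (x j - x i) (u j - u i) : ℝ)) • (x j - x i))

/-!
Because the families are symmetric and every bond coefficient is symmetric in `(i, j)` while the
bond vector `ξ = x j - x i` is antisymmetric, summation by parts over the bonds turns the pairing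
`⟨-𝓛u, v⟩` into
`(3K - 5G)/3 Σ_i V_i θ_i(u) θ_i(v)
  + 15G Σ_i Σ_{j∈F_i} V_i V_j κ_ij / (m |ξ|²) (ξ·(u_j - u_i)) (ξ·(v_j - v_i))`,
which is visibly symmetric in `u` and `v`. The dilatation term collapses in this way because the
bond weights summed against `ξ·(v_j - v_i)` over `j ∈ F_i` give back `θ_i(v)/3`.
-/

open Finset
open scoped RealInnerProductSpace

section PairSums

variable {ι : Type*} [Fintype ι] {F : ι → Finset ι}

theorem sum_sum_mem_comm {M : Type*} [AddCommMonoid M] (hF : ∀ i j, j ∈ F i ↔ i ∈ F j)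
    (f : ι → ι → M) : ∑ i, ∑ j ∈ F i, f i j = ∑ i, ∑ j ∈ F i, f j i :=
  Finset.sum_comm' fun i j => by simp [hF]

/-- Summation by parts over a symmetric neighbourhood system. -/
theorem sum_sum_mem_mul_inner_eq {E : Type*} [NormedAddCommGroup E] [InnerProductSpace ℝ E]
    (hF : ∀ i j, j ∈ F i ↔ i ∈ F j) {a : ι → ι → ℝ} (ha : ∀ i j, a i j = a j i) (p v : ι → E) :
    ∑ i, ∑ j ∈ F i, a i j * ⟪p j - p i, v i⟫ =
      -(∑ i, ∑ j ∈ F i, a i j * ⟪p j - p i, v j - v i⟫) / 2 := by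
  have hswap : ∑ i, ∑ j ∈ F i, a i j * ⟪p j - p i, v i⟫ =
      -∑ i, ∑ j ∈ F i, a i j * ⟪p j - p i, v j⟫ := by
    rw [sum_sum_mem_comm hF, ← sum_neg_distrib]
    refine sum_congr rfl fun i _ => ?_
    rw [← sum_neg_distrib]
    refine sum_congr rfl fun j _ => ?_
    rw [ha, ← neg_sub, inner_neg_left, mul_neg]
  simp only [inner_sub_right, mul_sub, sum_sub_distrib]
  linarith

end PairSums

section LPS

variable {ι : Type*} (x : ι → E3) (F : ι → Finset ι) (V : ι → ℝ) (κ : ℝ → ℝ) (m K G : ℝ)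

/-- The coefficient of `x j - x i` in the `j`-th summand of `V i • dLPS x F V κ m K G u i`. -/
noncomputable def bondCoeff (u : ι → E3) (i j : ι) : ℝ :=
  V i * (V j * (κ ‖x j - x i‖ / m)) *
    ((3 * K - 5 * G) * (dTheta x F V κ m u i + dTheta x F V κ m u j) +
      30 * G / ‖x j - x i‖ ^ 2 * ⟪x j - x i, u j - u i⟫)

theorem bondCoeff_comm (u : ι → E3) (i j : ι) :
    bondCoeff x F V κ m K G u i j = bondCoeff x F V κ m K G u j i := by
  rw [bondCoeff, bondCoeff, ← neg_sub (x j), ← neg_sub (u j), norm_neg, inner_neg_neg]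
  ring

theorem mul_inner_dLPS (u v : ι → E3) (i : ι) :
    V i * ⟪dLPS x F V κ m K G u i, v i⟫ =
      ∑ j ∈ F i, bondCoeff x F V κ m K G u i j * ⟪x j - x i, v i⟫ := by
  simp only [dLPS, sum_inner, mul_sum, ← add_smul, smul_smul, real_inner_smul_left, bondCoeff]
  exact sum_congr rfl fun j _ => by ring

theorem sum_mul_inner_eq_dTheta (u : ι → E3) (i : ι) :
    ∑ j ∈ F i, V j * (κ ‖x j - x i‖ / m) * ⟪x j - x i, u j - u i⟫ = dTheta x F V κ m u i / 3 := by
  rw [dTheta, mul_sum, sum_div]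
  exact sum_congr rfl fun j _ => by ring

theorem sum_sum_mem_mul_add_dTheta_mul_inner [Fintype ι] (hF : ∀ i j, j ∈ F i ↔ i ∈ F j)
    (u v : ι → E3) :
    ∑ i, ∑ j ∈ F i, V i * (V j * (κ ‖x j - x i‖ / m)) *
        (dTheta x F V κ m u i + dTheta x F V κ m u j) * ⟪x j - x i, v j - v i⟫ =
      2 / 3 * ∑ i, V i * dTheta x F V κ m u i * dTheta x F V κ m v i := by
  set w : ι → ι → ℝ := fun i j => V i * (V j * (κ ‖x j - x i‖ / m)) * ⟪x j - x i, v j - v i⟫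
  have hw : ∀ i j, w j i = w i j := fun i j => by
    simp only [w, ← neg_sub (x j), ← neg_sub (v j), norm_neg, inner_neg_neg]
    ring
  have hone : ∑ i, ∑ j ∈ F i, w i j * dTheta x F V κ m u i =
      1 / 3 * ∑ i, V i * dTheta x F V κ m u i * dTheta x F V κ m v i := by
    rw [mul_sum]
    refine sum_congr rfl fun i _ => ?_
    have hrow : ∑ j ∈ F i, w i j = V i * (dTheta x F V κ m v i / 3) := by
      rw [← sum_mul_inner_eq_dTheta, mul_sum]
      exact sum_congr rfl fun j _ => by ring
    rw [← sum_mul, hrow]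
    ring
  have hother : ∑ i, ∑ j ∈ F i, w i j * dTheta x F V κ m u j =
      ∑ i, ∑ j ∈ F i, w i j * dTheta x F V κ m u i := by
    rw [sum_sum_mem_comm hF]
    simp only [hw]
  calc _ = ∑ i, ∑ j ∈ F i, (w i j * dTheta x F V κ m u i + w i j * dTheta x F V κ m u j) :=
        sum_congr rfl fun i _ => sum_congr rfl fun j _ => by ring
    _ = _ := by
        simp only [sum_add_distrib, hother, hone]
        ring

theorem sum_mul_inner_neg_dLPS [Fintype ι] (hF : ∀ i j, j ∈ F i ↔ i ∈ F j) (u v : ι → E3) :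
    ∑ i, V i * ⟪-dLPS x F V κ m K G u i, v i⟫ =
      (3 * K - 5 * G) / 3 * ∑ i, V i * dTheta x F V κ m u i * dTheta x F V κ m v i +
        15 * G * ∑ i, ∑ j ∈ F i, V i * (V j * (κ ‖x j - x i‖ / m)) / ‖x j - x i‖ ^ 2 *
          ⟪x j - x i, u j - u i⟫ * ⟪x j - x i, v j - v i⟫ := by
  simp only [inner_neg_left, mul_neg, sum_neg_distrib, mul_inner_dLPS,
    sum_sum_mem_mul_inner_eq hF (bondCoeff_comm x F V κ m K G u), neg_div, neg_neg]
  have hsplit : ∑ i, ∑ j ∈ F i, bondCoeff x F V κ m K G u i j * ⟪x j - x i, v j - v i⟫ =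
      (3 * K - 5 * G) * ∑ i, ∑ j ∈ F i, V i * (V j * (κ ‖x j - x i‖ / m)) *
          (dTheta x F V κ m u i + dTheta x F V κ m u j) * ⟪x j - x i, v j - v i⟫ +
        30 * G * ∑ i, ∑ j ∈ F i, V i * (V j * (κ ‖x j - x i‖ / m)) / ‖x j - x i‖ ^ 2 *
          ⟪x j - x i, u j - u i⟫ * ⟪x j - x i, v j - v i⟫ := by
    rw [mul_sum, mul_sum, ← sum_add_distrib]
    refine sum_congr rfl fun i _ => ?_
    rw [mul_sum, mul_sum, ← sum_add_distrib]
    exact sum_congr rfl fun j _ => by rw [bondCoeff]; ring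
  rw [hsplit, sum_sum_mem_mul_add_dTheta_mul_inner x F V κ m hF]
  ring

end LPS

theorem dLPS_symmetric_general {ι : Type*} [Fintype ι]
    (x : ι → E3) (F : ι → Finset ι) (V : ι → ℝ)
    (κ : ℝ → ℝ)
    (m : ℝ)
    (K G : ℝ)
    (hFsymm : ∀ i j, j ∈ F i ↔ i ∈ F j) :
    ∀ u v : ι → E3,
      (∑ i, V i * (inner ℝ (-dLPS x F V κ m K G u i) (v i) : ℝ))
        = ∑ i, V i * (inner ℝ (u i) (-dLPS x F V κ m K G v i) : ℝ) := by
  intro u v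
  have hcomm : ∑ i, V i * ⟪u i, -dLPS x F V κ m K G v i⟫ =
      ∑ i, V i * ⟪-dLPS x F V κ m K G v i, u i⟫ :=
    sum_congr rfl fun i _ => by rw [real_inner_comm]
  rw [hcomm, sum_mul_inner_neg_dLPS x F V κ m K G hFsymm,
    sum_mul_inner_neg_dLPS x F V κ m K G hFsymm]
  congr 2
  · exact sum_congr rfl fun i _ => by ring
  · exact sum_congr rfl fun i _ => sum_congr rfl fun j _ => by ring

/-- With symmetric families and reciprocal quadrature weights, the discrete LPS
tangent stiffness (the linear map `u ↦ −𝓛^h_LPS`) is symmetric with respect to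
the volume-weighted inner product `⟨u, v⟩ = Σ_i u_i·v_i V_i`. -/
theorem dLPS_symmetric {ι : Type*} [Fintype ι]
    (x : ι → E3) (F : ι → Finset ι) (V : ι → ℝ) (hV : ∀ i, 0 < V i)
    (κ : ℝ → ℝ) (hκ : ∀ r, 0 ≤ κ r)
    (m : ℝ) (hm : 0 < m)
    (K G : ℝ) (hK : 0 < K) (hG : 0 < G)
    (hFsymm : ∀ i j, j ∈ F i ↔ i ∈ F j) :
    ∀ u v : ι → E3,
      (∑ i, V i * (inner ℝ (-dLPS x F V κ m K G u i) (v i) : ℝ))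
        = ∑ i, V i * (inner ℝ (u i) (-dLPS x F V κ m K G v i) : ℝ) :=
  dLPS_symmetric_general x F V κ m K G hFsymm
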